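/- When X ∪ Z equals the full parent set of Y in a Bayesian network, the interventional conditional probabilities in the natural direct effect reduce to observational ones: NDE_{X: 0→1}(Y) = Σ_z [P(Y=1 | X=1, z) − P(Y=1 | X=0, z)] P(z | do(X=0)). -/

import Mathlib

open scoped Classical

/-!
Eliminating the nodes of a Bayesian network from the top of a topological order, each
conditional distribution sums to one over its own value while no remaining factor depends on
it, so the truncated factorization with all of `PA_Y` fixed marginalizes to the single factor
`P(y | pa_Y)`. Both interventional expectations in the natural direct effect are therefore
observational conditional probabilities.
-/

open Finset Function

section Completions

variable {ι α : Type*} [Fintype ι] [DecidableEq ι] [Fintype α] [DecidableEq α]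

def completions (F : Finset ι) (base : ι → α) : Finset (ι → α) :=
  univ.filter fun s => ∀ j ∉ F, s j = base j

theorem mem_completions {F : Finset ι} {base s : ι → α} :
    s ∈ completions F base ↔ ∀ j ∉ F, s j = base j := by
  simp [completions]

theorem sum_completions_insert {M : Type*} [AddCommMonoid M] {F : Finset ι} {m : ι}
    (hm : m ∉ F) (base : ι → α) (f : (ι → α) → M) :
    ∑ s ∈ completions (insert m F) base, f s =
      ∑ t ∈ completions F base, ∑ b, f (update t m b) := by
  rw [← sum_product']
  symm
  refine sum_nbij' (fun p => update p.1 m p.2) (fun s => (update s m (base m), s m))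
    ?_ ?_ ?_ ?_ (fun _ _ => rfl)
  · rintro ⟨t, b⟩ h
    simp only [mem_product, mem_completions, mem_univ, and_true] at h
    simp only [mem_completions, mem_insert, not_or]
    rintro j ⟨hjm, hjF⟩
    rw [update_of_ne hjm, h j hjF]
  · intro s h
    simp only [mem_completions, mem_insert, not_or] at h
    simp only [mem_product, mem_completions, mem_univ, and_true]
    intro j hjF
    by_cases hjm : j = m
    · subst hjm; simp
    · rw [update_of_ne hjm, h j ⟨hjm, hjF⟩]
  · rintro ⟨t, b⟩ h
    simp only [mem_product, mem_completions, mem_univ, and_true] at h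
    simp [h m hm]
  · intro s _
    simp

end Completions

section BayesNet

variable {ι α : Type*} [LinearOrder ι] {parents : ι → Finset ι} {cpt : ι → α → (ι → α) → ℝ}

theorem cpt_update_of_notMem_parents
    (hdep : ∀ i b (s s' : ι → α), (∀ j ∈ parents i, s j = s' j) → cpt i b s = cpt i b s')
    {i m : ι} (him : m ∉ parents i) (b c : α) (t : ι → α) :
    cpt i b (update t m c) = cpt i b t :=
  hdep i b _ t fun _ hj => update_of_ne (ne_of_mem_of_not_mem hj him) c t

variable [Fintype ι] [Fintype α] [DecidableEq α]

theorem sum_completions_prod_cpt (hdag : ∀ i, ∀ j ∈ parents i, j < i)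
    (hdep : ∀ i b (s s' : ι → α), (∀ j ∈ parents i, s j = s' j) → cpt i b s = cpt i b s')
    (hsum : ∀ i s, ∑ b, cpt i b s = 1) (F : Finset ι) (base : ι → α) :
    ∑ s ∈ completions F base, ∏ j ∈ F, cpt j (s j) s = 1 := by
  induction F using induction_on_max with
  | empty =>
    have hbase : completions ∅ base = {base} := by ext s; simp [mem_completions, funext_iff]
    simp [hbase]
  | insert m F hlt ih =>
    have hm : m ∉ F := fun h => lt_irrefl m (hlt m h)
    -- `m` is maximal, so changing its value affects only its own factor.
    have hpa : ∀ j ∈ insert m F, m ∉ parents j := by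
      intro j hj hmj
      rcases mem_insert.1 hj with rfl | hjF
      · exact lt_irrefl j (hdag j j hmj)
      · exact lt_asymm (hdag j m hmj) (hlt j hjF)
    rw [sum_completions_insert hm]
    refine Eq.trans (sum_congr rfl fun t _ => ?_) ih
    have hF : ∀ b, ∏ j ∈ F, cpt j (update t m b j) (update t m b) = ∏ j ∈ F, cpt j (t j) t :=
      fun b => prod_congr rfl fun j hj => by
        rw [update_of_ne (ne_of_lt (hlt j hj)),
          cpt_update_of_notMem_parents hdep (hpa j (mem_insert_of_mem hj))]
    simp only [prod_insert hm, update_self, hF,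
      cpt_update_of_notMem_parents hdep (hpa m (mem_insert_self m F)), ← sum_mul, hsum, one_mul]

/-- `P(y | do(pa_Y)) = P(y | pa_Y)`. -/
theorem sum_truncated_factorization_eq_cpt (hdag : ∀ i, ∀ j ∈ parents i, j < i)
    (hdep : ∀ i b (s s' : ι → α), (∀ j ∈ parents i, s j = s' j) → cpt i b s = cpt i b s')
    (hsum : ∀ i s, ∑ b, cpt i b s = 1) (Y : ι) (y : α) (r : ι → α) :
    ∑ s ∈ univ.filter (fun s => (∀ j ∈ parents Y, s j = r j) ∧ s Y = y),
      ∏ j ∈ univ.filter (· ∉ parents Y), cpt j (s j) s = cpt Y y r := by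
  have hY : Y ∉ parents Y := fun h => lt_irrefl Y (hdag Y Y h)
  set F := (univ.filter (· ∉ parents Y)).erase Y
  have hnotF : ∀ j, j ∉ F ↔ j = Y ∨ j ∈ parents Y := by
    intro j; by_cases hj : j = Y <;> simp [F, hj]
  have hfilter : univ.filter (fun s => (∀ j ∈ parents Y, s j = r j) ∧ s Y = y) =
      completions F (update r Y y) := by
    ext s
    simp only [mem_filter, mem_univ, true_and, mem_completions, hnotF]
    constructor
    · rintro ⟨hr, hy⟩ j (rfl | hj)
      · simp [hy]
      · rw [update_of_ne (ne_of_mem_of_not_mem hj hY), hr j hj]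
    · intro h
      refine ⟨fun j hj => ?_, by simpa using h Y (Or.inl rfl)⟩
      rw [h j (Or.inr hj), update_of_ne (ne_of_mem_of_not_mem hj hY)]
  have hcptY : ∀ s ∈ completions F (update r Y y), cpt Y (s Y) s = cpt Y y r := by
    intro s hs
    rw [mem_completions] at hs
    rw [hs Y ((hnotF Y).2 (Or.inl rfl)), update_self]
    exact hdep Y y s r fun j hj => by
      rw [hs j ((hnotF j).2 (Or.inr hj)), update_of_ne (ne_of_mem_of_not_mem hj hY)]
  rw [hfilter, ← insert_erase (mem_filter.2 ⟨mem_univ Y, hY⟩ : Y ∈ univ.filter (· ∉ parents Y))]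
  simp only [prod_insert (notMem_erase Y _)]
  rw [sum_congr rfl fun s hs => by rw [hcptY s hs], ← mul_sum,
    sum_completions_prod_cpt hdag hdep hsum, mul_one]

end BayesNet

theorem stmt_10_general {n : ℕ} (parents : Fin n → Finset (Fin n))
    (cpt : Fin n → Bool → (Fin n → Bool) → ℝ)
    (hdag : ∀ i, ∀ j ∈ parents i, j < i)
    (hdep : ∀ i b (s s' : Fin n → Bool), (∀ j ∈ parents i, s j = s' j) →
      cpt i b s = cpt i b s')
    (hsum : ∀ i s, cpt i true s + cpt i false s = 1)
    (Y X : Fin n) (hX : X ∈ parents Y)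
    (w : (Fin n → Bool) → ℝ) :
    -- E(Y = 1 | do(X = x, z)) via the truncated factorization:
    let Edo : Bool → (Fin n → Bool) → ℝ := fun x z =>
      ∑ s : Fin n → Bool,
        if (s X = x ∧ ∀ j ∈ parents Y, j ≠ X → s j = z j) ∧ s Y = true then
          ∏ j ∈ Finset.univ.filter (fun j => j ∉ parents Y), cpt j (s j) s
        else 0
    -- the parent assignment with X set to x and the other parents set as in z:
    let a : Bool → (Fin n → Bool) → (Fin n → Bool) := fun x z j =>
      if j = X then x else z j
    ∑ z : Fin n → Bool, (Edo true z - Edo false z) * w z =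
      ∑ z : Fin n → Bool,
        (cpt Y true (a true z) - cpt Y true (a false z)) * w z := by
  intro Edo a
  have hsum' : ∀ i s, ∑ b, cpt i b s = 1 := fun i s => by rw [Fintype.sum_bool, hsum]
  have hpa : ∀ x z (s : Fin n → Bool), (s X = x ∧ ∀ j ∈ parents Y, j ≠ X → s j = z j) ↔
      ∀ j ∈ parents Y, s j = a x z j := by
    intro x z s
    constructor
    · rintro ⟨hx, hz⟩ j hj
      by_cases hjX : j = X
      · simp [a, hjX, hx]
      · simp [a, hjX, hz j hj hjX]
    · intro h
      exact ⟨by simpa [a] using h X hX, fun j hj hjX => by simpa [a, hjX] using h j hj⟩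
  have hEdo : ∀ x z, Edo x z = cpt Y true (a x z) := fun x z => by
    simp only [Edo, hpa, ← sum_filter]
    convert sum_truncated_factorization_eq_cpt hdag hdep hsum' Y true (a x z)
  simp only [hEdo]

/-- When `{X} ∪ Z` is the full parent set of `Y`, the
interventional expectations in the natural direct effect reduce to
observational conditional probabilities:
`NDE_{X:0→1}(Y) = Σ_z [P(Y=1 | X=1, z) − P(Y=1 | X=0, z)] P(z | do(X=0))`.
Here `E(Y | do(x, z))` is computed from the truncated factorization with all
parents of `Y` fixed (`X` to `x` and the rest to `z`), and
`P(Y=1 | X=x, z) = cpt Y true` evaluated at the corresponding parent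
assignment. -/
theorem stmt_10 {n : ℕ} (parents : Fin n → Finset (Fin n))
    (cpt : Fin n → Bool → (Fin n → Bool) → ℝ)
    (hdag : ∀ i, ∀ j ∈ parents i, j < i)
    (hdep : ∀ i b (s s' : Fin n → Bool), (∀ j ∈ parents i, s j = s' j) →
      cpt i b s = cpt i b s')
    (hnn : ∀ i b s, 0 ≤ cpt i b s)
    (hsum : ∀ i s, cpt i true s + cpt i false s = 1)
    (Y X : Fin n) (hX : X ∈ parents Y)
    (w : (Fin n → Bool) → ℝ)  -- w z = P(z | do(X = 0))
    (hw : ∀ z, 0 ≤ w z) :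
    -- E(Y = 1 | do(X = x, z)) via the truncated factorization:
    let Edo : Bool → (Fin n → Bool) → ℝ := fun x z =>
      ∑ s : Fin n → Bool,
        if (s X = x ∧ ∀ j ∈ parents Y, j ≠ X → s j = z j) ∧ s Y = true then
          ∏ j ∈ Finset.univ.filter (fun j => j ∉ parents Y), cpt j (s j) s
        else 0
    -- the parent assignment with X set to x and the other parents set as in z:
    let a : Bool → (Fin n → Bool) → (Fin n → Bool) := fun x z j =>
      if j = X then x else z j
    ∑ z : Fin n → Bool, (Edo true z - Edo false z) * w z =
      ∑ z : Fin n → Bool,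
        (cpt Y true (a true z) - cpt Y true (a false z)) * w z :=
  stmt_10_general parents cpt hdag hdep hsum Y X hX w
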